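/- Let G be a finite group. If G is not an NCI^{(2)}-group, then there exists a G-regular subgroup R ≠ G_r of Hol(G) such that the S-ring A = V(G_r R, G) is normal and not CI. If moreover G is a p-group, then A is a p-S-ring. -/

import Mathlib

/-- The right regular representation `G →* Sym(G)`, `g ↦ (x ↦ x * g)`
(made a homomorphism w.r.t. the permutation product `(f*g) x = f (g x)`). -/
def rightRegHom (G : Type*) [Group G] : G →* Equiv.Perm G where
  toFun g := Equiv.mulRight g⁻¹
  map_one' := by ext x; simp
  map_mul' a b := by ext x; simp [mul_assoc]

/-- The group of right translations `G_r ≤ Sym(G)`. -/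
def rightReg (G : Type*) [Group G] : Subgroup (Equiv.Perm G) :=
  (rightRegHom G).range

/-- A subgroup of `Sym(α)` is regular if it acts simply transitively. -/
def IsRegularPermSubgroup {α : Type*} (R : Subgroup (Equiv.Perm α)) : Prop :=
  ∀ x y : α, ∃! r : R, (r : Equiv.Perm α) x = y

/-- A `G`-regular subgroup of `Sym(G)`: a regular subgroup isomorphic to `G`. -/
def IsGRegular (G : Type*) [Group G] (R : Subgroup (Equiv.Perm G)) : Prop :=
  IsRegularPermSubgroup R ∧ Nonempty (R ≃* G)

/-- The holomorph `Hol(G) = G_r ⋊ Aut(G)` as a subgroup of `Sym(G)`. -/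
def hol (G : Type*) [Group G] : Subgroup (Equiv.Perm G) where
  carrier := {f : Equiv.Perm G | ∃ σ : MulAut G, ∃ a : G, ∀ g : G, f g = σ g * a}
  one_mem' := ⟨1, 1, fun g => by simp⟩
  mul_mem' := by
    rintro f f' ⟨σ, a, hf⟩ ⟨σ', a', hf'⟩
    refine ⟨σ * σ', σ a' * a, fun g => ?_⟩
    rw [Equiv.Perm.mul_apply, hf' g, hf, map_mul]
    simp [mul_assoc]
  inv_mem' := by
    rintro f ⟨σ, a, hf⟩
    refine ⟨σ⁻¹, σ⁻¹ (a⁻¹), fun g => f.injective ?_⟩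
    rw [Equiv.Perm.coe_inv, Equiv.apply_symm_apply, hf, ← map_mul]
    simp

/-- The 2-closure of a permutation group: all permutations preserving each
orbit of the componentwise action on ordered pairs. -/
def twoClosure {α : Type*} (K : Subgroup (Equiv.Perm α)) : Subgroup (Equiv.Perm α) where
  carrier := {f : Equiv.Perm α | ∀ x y : α, ∃ k ∈ K, f x = k x ∧ f y = k y}
  one_mem' := fun x y => ⟨1, K.one_mem, rfl, rfl⟩
  mul_mem' := by
    intro f g hf hg x y
    obtain ⟨k, hk, hk1, hk2⟩ := hg x y
    obtain ⟨k', hk', h1, h2⟩ := hf (g x) (g y)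
    refine ⟨k' * k, mul_mem hk' hk, ?_, ?_⟩
    · rw [Equiv.Perm.mul_apply, Equiv.Perm.mul_apply, h1, hk1]
    · rw [Equiv.Perm.mul_apply, Equiv.Perm.mul_apply, h2, hk2]
  inv_mem' := by
    intro f hf x y
    obtain ⟨k, hk, h1, h2⟩ := hf (f⁻¹ x) (f⁻¹ y)
    refine ⟨k⁻¹, inv_mem hk, k.injective ?_, k.injective ?_⟩
    · rw [Equiv.Perm.coe_inv k, Equiv.apply_symm_apply, ← h1, Equiv.Perm.coe_inv, Equiv.apply_symm_apply]
    · rw [Equiv.Perm.coe_inv k, Equiv.apply_symm_apply, ← h2, Equiv.Perm.coe_inv, Equiv.apply_symm_apply]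

/-- A permutation group `K` with `G_r ≤ K` is `G`-transjugate if every
`G`-regular subgroup of `K` is conjugate in `K` to `G_r`. -/
def IsTransjugate (G : Type*) [Group G] (K : Subgroup (Equiv.Perm G)) : Prop :=
  ∀ R : Subgroup (Equiv.Perm G), R ≤ K → IsGRegular G R →
    ∃ k ∈ K, Subgroup.map (MulAut.conj k).toMonoidHom R = rightReg G

/-- `G` is an `NCI⁽²⁾`-group: every 2-closed subgroup of `Sym(G)` between
`G_r` and `Hol(G)` is `G`-transjugate. -/
def IsNCI2 (G : Type*) [Group G] : Prop :=
  ∀ K : Subgroup (Equiv.Perm G), rightReg G ≤ K → K ≤ hol G →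
    twoClosure K = K → IsTransjugate G K

/-- The natural embedding `Sym(α) × Sym(β) →* Sym(α × β)`. -/
def prodPermHom (α β : Type*) : Equiv.Perm α × Equiv.Perm β →* Equiv.Perm (α × β) where
  toFun p := Equiv.prodCongr p.1 p.2
  map_one' := by ext x <;> simp
  map_mul' p q := by ext x <;> simp

/-!
A failure of `NCI⁽²⁾` is witnessed by a 2-closed `K` with `G_r ≤ K ≤ Hol(G)` and a `G`-regular
`R ≤ K` that no element of `K` conjugates to `G_r`. Then `R ≠ G_r`, the 2-closure of `G_r R` lies
in `K ≤ Hol(G)`, and `R` is not conjugate to `G_r` inside it either. If `G` is a `p`-group, `G_r`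
is normalized by `Hol(G) ⊇ R`, so `G_r R` is a `p`-group and every orbit of its stabilizer of `1`
has `p`-power size.
-/

section TwoClosure

variable {α : Type*}

theorem le_twoClosure (K : Subgroup (Equiv.Perm α)) : K ≤ twoClosure K :=
  fun f hf _ _ => ⟨f, hf, rfl, rfl⟩

theorem twoClosure_mono {K L : Subgroup (Equiv.Perm α)} (h : K ≤ L) :
    twoClosure K ≤ twoClosure L := fun _ hf x y =>
  let ⟨k, hk, hx, hy⟩ := hf x y
  ⟨k, h hk, hx, hy⟩

theorem twoClosure_le_of_le {K L : Subgroup (Equiv.Perm α)} (h : K ≤ L)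
    (hL : twoClosure L = L) : twoClosure K ≤ L :=
  hL ▸ twoClosure_mono h

end TwoClosure

section Holomorph

variable {G : Type*} [Group G]

/-- If `k = (g ↦ σ g * a)`, then `k ρ_g k⁻¹ = ρ_{a⁻¹ σ(g) a}`. -/
theorem conj_mem_rightReg_of_mem_hol {k ρ : Equiv.Perm G} (hk : k ∈ hol G)
    (hρ : ρ ∈ rightReg G) : k * ρ * k⁻¹ ∈ rightReg G := by
  obtain ⟨σ, a, hσ⟩ := hk
  obtain ⟨g, rfl⟩ := hρ
  refine ⟨a⁻¹ * σ g * a, Equiv.ext fun x => ?_⟩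
  have hx : x = σ (k⁻¹ x) * a := by rw [← hσ]; simp
  show x * (a⁻¹ * σ g * a)⁻¹ = k (k⁻¹ x * g⁻¹)
  rw [hσ, map_mul, map_inv]
  conv_lhs => rw [hx]
  group

theorem hol_le_normalizer_rightReg :
    hol G ≤ Subgroup.normalizer (rightReg G : Set (Equiv.Perm G)) := by
  intro k hk
  rw [Subgroup.mem_normalizer_iff]
  refine fun ρ => ⟨fun hρ => conj_mem_rightReg_of_mem_hol hk hρ, fun hρ => ?_⟩
  simpa [mul_assoc] using conj_mem_rightReg_of_mem_hol (inv_mem hk) hρ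

theorem isPGroup_rightReg {p : ℕ} (hG : IsPGroup p G) : IsPGroup p (rightReg G) :=
  hG.of_surjective (rightRegHom G).rangeRestrict
    (rightRegHom G).rangeRestrict_surjective

theorem isPGroup_rightReg_sup {p : ℕ} {R : Subgroup (Equiv.Perm G)} (hG : IsPGroup p G)
    (hR : IsPGroup p R) (hRhol : R ≤ hol G) : IsPGroup p ↥(rightReg G ⊔ R) :=
  (isPGroup_rightReg hG).to_sup_of_normal_left' hR (hRhol.trans hol_le_normalizer_rightReg)

end Holomorph

theorem IsPGroup.exists_ncard_stabilizer_orbit_eq_pow {α : Type*} [Finite α] {p : ℕ}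
    [Fact p.Prime] {H : Subgroup (Equiv.Perm α)} (hH : IsPGroup p H) (a x : α) :
    ∃ k : ℕ, {y : α | ∃ f ∈ H, f a = a ∧ f x = y}.ncard = p ^ k := by
  have horbit : {y : α | ∃ f ∈ H, f a = a ∧ f x = y} =
      MulAction.orbit ↥(H ⊓ MulAction.stabilizer (Equiv.Perm α) a) x := by
    ext y
    constructor
    · rintro ⟨f, hfH, hfa, rfl⟩
      exact ⟨⟨f, hfH, hfa⟩, rfl⟩
    · rintro ⟨⟨f, hfH, hfa⟩, rfl⟩
      exact ⟨f, hfH, hfa, rfl⟩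
  rw [horbit, ← Nat.card_coe_set_eq]
  exact hH.to_inf_left.card_orbit x

/-- If a finite group `G` is not an `NCI⁽²⁾`-group, then
there is a `G`-regular subgroup `R ≠ G_r` of `Hol(G)` such that the
S-ring `A = V(G_r R, G)` is normal (its automorphism group, the 2-closure
of `G_r R = ⟨G_r, R⟩`, lies in `Hol(G)`) and not CI (the 2-closure is not
`G`-transjugate). If moreover `G` is a `p`-group, then `A` is a
`p`-S-ring: every orbit of the point stabilizer of `1` has `p`-power
size. -/
theorem noncinorm {G : Type*} [Group G] [Fintype G] (h : ¬ IsNCI2 G) :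
    ∃ R : Subgroup (Equiv.Perm G), IsGRegular G R ∧ R ≠ rightReg G ∧
      R ≤ hol G ∧
      twoClosure (rightReg G ⊔ R) ≤ hol G ∧
      ¬ IsTransjugate G (twoClosure (rightReg G ⊔ R)) ∧
      (∀ p : ℕ, p.Prime → IsPGroup p G → ∀ x : G, ∃ k : ℕ,
        {g : G | ∃ f ∈ rightReg G ⊔ R, f 1 = 1 ∧ f x = g}.ncard = p ^ k) := by
  obtain ⟨K, hGK, hKhol, hK, hKT⟩ : ∃ K : Subgroup (Equiv.Perm G),
      rightReg G ≤ K ∧ K ≤ hol G ∧ twoClosure K = K ∧ ¬ IsTransjugate G K := by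
    simpa [IsNCI2] using h
  obtain ⟨R, hRK, hR, hRconj⟩ : ∃ R ≤ K, IsGRegular G R ∧
      ∀ k ∈ K, R.map (MulAut.conj k).toMonoidHom ≠ rightReg G := by
    simpa [IsTransjugate] using hKT
  have hLK : twoClosure (rightReg G ⊔ R) ≤ K := twoClosure_le_of_le (sup_le hGK hRK) hK
  refine ⟨R, hR, fun hRG => hRconj 1 K.one_mem ?_, hRK.trans hKhol, hLK.trans hKhol,
    fun hT => ?_, fun p hp hpG x => ?_⟩
  · rw [hRG, map_one]
    exact (rightReg G).map_id
  · obtain ⟨k, hk, hkR⟩ := hT R (le_sup_right.trans (le_twoClosure _)) hR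
    exact hRconj k (hLK hk) hkR
  · have := Fact.mk hp
    obtain ⟨e⟩ := hR.2
    have hGR : IsPGroup p ↥(rightReg G ⊔ R) :=
      isPGroup_rightReg_sup hpG (hpG.of_equiv e.symm) (hRK.trans hKhol)
    exact hGR.exists_ncard_stabilizer_orbit_eq_pow 1 x
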